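/- Let η be a geodesic current and let μ be its corresponding frequency measure (i.e. η(Cyl[x,y]) = μ(Cyl(x⁻¹y)) for all x ≠ y in F). Suppose that for each a ∈ A there exist constants C_1(a), C_2(a) > 0 such that C_1(a)·μ(E) ≤ μ(a·E) ≤ C_2(a)·μ(E) for every Borel set E ⊆ ∂F ∖ Cyl(a⁻¹), and for a freely reduced word w = a_0⋯a_m set C_i(w) = C_i(a_0)⋯C_i(a_m) for i = 1, 2. If there is a constant M > 0 such that inf over w ∈ F of C_1(w⁻¹)/C_2(w) is at least 1/M and sup over w ∈ F of C_2(w) is at most M, then there exists a constant c > 0 and for every f ∈ F a constant b(f) > 0 such that for all disjoint Borel sets E, S ⊆ ∂F one has μ(f·E) ≥ b(f)·μ(E) and η((E × S) ∩ ∂²F) ≥ c·μ(E)·μ(S). -/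

import Mathlib

open MeasureTheory Filter Topology
open scoped ENNReal NNReal

namespace FGC

noncomputable section

variable (k : ℕ)

/-- The alphabet `A = Σ ∪ Σ⁻¹`: a letter is a basis element together with a sign. -/
abbrev L := Fin k × Bool

/-- The inverse of a letter. -/
def linv (a : L k) : L k := (a.1, !a.2)

/-- A right-infinite word is (freely) reduced if no letter is followed by its inverse. -/
def Red (x : ℕ → L k) : Prop := ∀ n, x (n + 1) ≠ linv k (x n)

/-- The boundary `∂F`: the set of infinite freely reduced words in the alphabet `A`. -/
def Boundary : Type := { x : ℕ → L k // Red k x }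

instance : TopologicalSpace (Boundary k) :=
  inferInstanceAs (TopologicalSpace { x : ℕ → L k // Red k x })

instance : MeasurableSpace (Boundary k) := borel _

instance : BorelSpace (Boundary k) := ⟨rfl⟩

/-- The free group of rank `k`. -/
abbrev F := FreeGroup (Fin k)

/-- The word length `|v|` of an element of `F`. -/
def wordLength (v : F k) : ℕ := v.toWord.length

/-- The cyclically reduced length `‖v‖`: the minimal word length among conjugates of `v`. -/
def cyclLength (v : F k) : ℕ := sInf { n | ∃ g : F k, wordLength k (g * v * g⁻¹) = n }

/-- The cylinder `Cyl v ⊆ ∂F` of rays starting with the reduced word of `v`. -/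
def Cyl (v : F k) : Set (Boundary k) :=
  { x | ∀ i : Fin v.toWord.length, x.1 i = v.toWord.get i }

/-- The shift deleting the first letter of a ray. -/
def shift (x : ℕ → L k) : ℕ → L k := fun n => x (n + 1)

/-- Prepending a letter to a ray. -/
def cons (a : L k) (x : ℕ → L k) : ℕ → L k
  | 0 => a
  | n + 1 => x n

/-- Prepending a (reversed) finite word to a ray, performing free reduction. -/
def prependAux : List (L k) → (ℕ → L k) → ℕ → L k
  | [], x => x
  | a :: r, x => prependAux r (if x 0 = linv k a then shift k x else cons k a x)

theorem red_shift {x : ℕ → L k} (hx : Red k x) : Red k (shift k x) :=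
  fun n => hx (n + 1)

theorem red_cons {a : L k} {x : ℕ → L k} (hx : Red k x) (h : x 0 ≠ linv k a) :
    Red k (cons k a x) := by
  intro n
  cases n with
  | zero => exact h
  | succ m => exact hx m

theorem red_prependAux : ∀ (r : List (L k)) {x : ℕ → L k}, Red k x → Red k (prependAux k r x)
  | [], _, hx => hx
  | a :: r, x, hx => by
    by_cases h : x 0 = linv k a
    · simp only [prependAux, if_pos h]
      exact red_prependAux r (red_shift k hx)
    · simp only [prependAux, if_neg h]
      exact red_prependAux r (red_cons k hx h)

/-- The left-translation action of `F` on `∂F`: concatenate and freely reduce. -/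
def act (g : F k) (x : Boundary k) : Boundary k :=
  ⟨prependAux k g.toWord.reverse x.1, red_prependAux k _ x.2⟩

/-- The shift map `T : ∂F → ∂F`. -/
def Tmap (x : Boundary k) : Boundary k := ⟨shift k x.1, red_shift k x.2⟩

/-- The double boundary `∂²F`, as the complement of the diagonal. -/
def D2 : Set (Boundary k × Boundary k) := { p | p.1 ≠ p.2 }

/-- The diagonal action of `F` on `∂F × ∂F`. -/
def actPair (g : F k) (p : Boundary k × Boundary k) : Boundary k × Boundary k :=
  (act k g p.1, act k g p.2)

/-- The cylinder `Cyl[1,w]` of geodesics through the segment from `1` to `w`. -/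
def baseCyl (w : F k) : Set (Boundary k × Boundary k) :=
  { p | p.1.1 0 ≠ p.2.1 0 ∧ p.2 ∈ Cyl k w }

/-- The base-ball `B = Cyl[1,1]` of geodesics through the base point. -/
def baseBall : Set (Boundary k × Boundary k) := baseCyl k 1

/-- The cylinder `Cyl[x,y] = x · Cyl[1, x⁻¹y]`. -/
def Cyl2 (x y : F k) : Set (Boundary k × Boundary k) :=
  actPair k x '' baseCyl k (x⁻¹ * y)

/-- A geodesic current: a Borel measure on `∂F × ∂F` giving no mass to the diagonal,
invariant under the diagonal `F`-action, and finite on compact subsets of `∂²F`. -/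
def IsCurrent (η : Measure (Boundary k × Boundary k)) : Prop :=
  η { p | p.1 = p.2 } = 0 ∧
  (∀ g : F k, ∀ W : Set (Boundary k × Boundary k), MeasurableSet W →
    η (actPair k g ⁻¹' W) = η W) ∧
  (∀ K : Set (Boundary k × Boundary k), K ⊆ D2 k → IsCompact K → η K < ⊤)

/-- The element of `F` given by the first `n` letters of a ray. -/
def prefixEl (x : Boundary k) (n : ℕ) : F k :=
  FreeGroup.mk (List.ofFn fun i : Fin n => x.1 i)

/-- `b : ∂F → ∂F` is the boundary extension of the automorphism `Φ`: for every ray `x`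
and every `m`, the length-`m` prefix of `b x` is the length-`m` prefix of the reduced
word of `Φ (x|_n)` for all sufficiently large `n`. -/
def IsBdryExt (Φ : F k ≃* F k) (b : Boundary k → Boundary k) : Prop :=
  ∀ x : Boundary k, ∀ m : ℕ, ∃ N : ℕ, ∀ n ≥ N,
    (Φ (prefixEl k x n)).toWord.take m = List.ofFn fun i : Fin m => (b x).1 i

/-- The map `∂Φ × ∂Φ` on pairs. -/
def pairMap (b : Boundary k → Boundary k) (p : Boundary k × Boundary k) :
    Boundary k × Boundary k := (b p.1, b p.2)

/-- The length of an automorphism with boundary map `b`, w.r.t. the current `η`: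
`L(Φ) = η((∂Φ × ∂Φ)⁻¹ B)`. -/
def autLen (η : Measure (Boundary k × Boundary k)) (b : Boundary k → Boundary k) : ℝ≥0∞ :=
  η (pairMap k b ⁻¹' baseBall k)

/-- The subgroup of inner automorphisms. -/
abbrev Inn : Subgroup (MulAut (F k)) := (MulAut.conj : F k →* MulAut (F k)).range

/-- `Out(F) = Aut(F)/Inn(F)` as a coset space. -/
abbrev OutQ := MulAut (F k) ⧸ Inn k

/-- A simple automorphism: induced by a permutation of the basis, or inner. -/
def SimpleAut (Φ : MulAut (F k)) : Prop :=
  (∃ σ : Equiv.Perm (Fin k), ∀ i, Φ (FreeGroup.of i) = FreeGroup.of (σ i)) ∨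
  (∃ v : F k, ∀ x, Φ x = v * x * v⁻¹)

/-- A Whitehead automorphism of the second kind. -/
def Whitehead2 (τ : MulAut (F k)) : Prop :=
  ∃ a : Fin k, ∀ i : Fin k,
    τ (FreeGroup.of i) = FreeGroup.of i ∨
    τ (FreeGroup.of i) = FreeGroup.of i * FreeGroup.of a ∨
    τ (FreeGroup.of i) = (FreeGroup.of a)⁻¹ * FreeGroup.of i ∨
    τ (FreeGroup.of i) = (FreeGroup.of a)⁻¹ * FreeGroup.of i * FreeGroup.of a

/-- The space of frequency measures: finite `T`-invariant Borel measures on `∂F`. -/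
def FreqM : Type :=
  { μ : Measure (Boundary k) //
    IsFiniteMeasure μ ∧ ∀ W : Set (Boundary k), MeasurableSet W → μ (Tmap k ⁻¹' W) = μ W }

/-- The space of geodesic currents. -/
def Currents : Type := { η : Measure (Boundary k × Boundary k) // IsCurrent k η }

/-- Continuous functions on `∂F × ∂F` with compact support contained in `∂²F`;
these are the test functions for the weak-* topology on currents. -/
def TestF : Type :=
  { φ : Boundary k × Boundary k → ℝ //
    Continuous φ ∧ IsCompact (tsupport φ) ∧ tsupport φ ⊆ D2 k }

/-- The weak-* topology on frequency measures. -/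
instance : TopologicalSpace (FreqM k) :=
  ⨅ φ : C(Boundary k, ℝ),
    TopologicalSpace.induced (fun μ : FreqM k => ∫ x, φ x ∂μ.1) inferInstance

/-- The weak-* topology on geodesic currents. -/
instance : TopologicalSpace (Currents k) :=
  ⨅ φ : TestF k,
    TopologicalSpace.induced (fun η : Currents k => ∫ p, φ.1 p ∂η.1) inferInstance

/-- Convergence of a sequence of group elements (as reduced words) to a boundary ray. -/
def WordTendsto (pn : ℕ → F k) (p : Boundary k) : Prop :=
  ∀ m : ℕ, ∃ N : ℕ, ∀ n ≥ N, (pn n).toWord.take m = List.ofFn fun i : Fin m => p.1 i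

/-- The length of the maximal common initial segment of two rays. -/
def commonLen (p : Boundary k × Boundary k) : ℕ :=
  sSup { m : ℕ | ∀ i < m, p.1.1 i = p.2.1 i }

/-- A single letter as an element of `F`. -/
def el (a : L k) : F k := FreeGroup.mk [a]

/-- The product of per-letter constants over the reduced word of `w`. -/
def Cprod (C : L k → ℝ≥0) (w : F k) : ℝ≥0 := (w.toWord.map C).prod

/-!
Translating by a letter `a` multiplies the measure of a set of rays not starting with `a⁻¹` by a
factor in `[C1 a, C2 a]`; on rays starting with `a⁻¹`, apply the bound for `a⁻¹` to the translate
instead. So `μ (a • E) ≥ min (C1 a) (C2 a⁻¹)⁻¹ μ E` for every letter, and `b(f)` is a product of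
such constants along a word for `f`.

For the current, `E × S` is cut according to the longest common prefix `l` of the two rays, so it
suffices to bound `η (X × Y)` for `X ⊆ Cyl(la)`, `Y ⊆ Cyl(lb)` with letters `a ≠ b`. On cylinder
rectangles `Cyl(lau) × Cyl(lbw)` the correspondence gives
`η = μ(Cyl((au)⁻¹bw)) ≥ C1((au)⁻¹) μ(Cyl(bw))`, while
`μ(Cyl(lau)) ≤ M C2(au) μ(∂F) ≤ M² C1((au)⁻¹) μ(∂F)` and `μ(Cyl(lbw)) ≤ M μ(Cyl(bw))`.
So `μ ⊗ μ ≤ M³ μ(∂F) η` on all fine enough cylinder rectangles inside `Cyl(la) × Cyl(lb)`, hence on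
its open subsets (disjoint unions of such rectangles) and, by outer regularity of the finite
measure `η` there, on all its Borel subsets; `c = (M³ μ(∂F))⁻¹`.
-/

section Development

variable {k : ℕ}

open FreeGroup (IsReduced)
open scoped Pointwise

/-! ### Letters and reduced words -/

@[simp] lemma linv_linv (a : L k) : linv k (linv k a) = a := by
  simp [linv]

lemma ne_linv_iff {a b : L k} : b ≠ linv k a ↔ (a.1 = b.1 → a.2 = b.2) := by
  obtain ⟨i, s⟩ := a
  obtain ⟨j, t⟩ := b
  cases s <;> cases t <;> simp [linv, eq_comm]

lemma isReduced_pair {a b : L k} : IsReduced [a, b] ↔ b ≠ linv k a := by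
  simp [FreeGroup.isReduced_cons_cons, ne_linv_iff]

lemma isReduced_invRev {l : List (L k)} (h : IsReduced l) : IsReduced (FreeGroup.invRev l) := by
  rw [FreeGroup.isReduced_iff_reduce_eq, FreeGroup.reduce_invRev, h.reduce_eq]

lemma invRev_concat (r : List (L k)) (c : L k) :
    FreeGroup.invRev (r ++ [c]) = linv k c :: FreeGroup.invRev r := by
  rw [FreeGroup.invRev_append]
  rfl

lemma isReduced_invRev_append {a b : L k} {u w : List (L k)} (hab : a ≠ b)
    (hu : IsReduced (a :: u)) (hw : IsReduced (b :: w)) :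
    IsReduced (FreeGroup.invRev (a :: u) ++ b :: w) := by
  have hinv : FreeGroup.invRev (a :: u) = FreeGroup.invRev u ++ [linv k a] :=
    FreeGroup.invRev_cons
  rw [hinv]
  refine (hinv ▸ isReduced_invRev hu).append_overlap ?_ (List.cons_ne_nil _ _)
  rw [List.singleton_append, FreeGroup.isReduced_cons_cons, ← ne_linv_iff, linv_linv]
  exact ⟨hab.symm, hw⟩

lemma inv_mk_append_mul_mk_append (l r s : List (L k)) :
    (FreeGroup.mk (l ++ r))⁻¹ * FreeGroup.mk (l ++ s) =
      FreeGroup.mk (FreeGroup.invRev r ++ s) := by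
  rw [← FreeGroup.mul_mk, ← FreeGroup.mul_mk, mul_inv_rev, mul_assoc, inv_mul_cancel_left,
    FreeGroup.inv_mk, FreeGroup.mul_mk]

lemma el_linv (a : L k) : el k (linv k a) = (el k a)⁻¹ := by
  rw [el, el, FreeGroup.inv_mk]
  rfl

lemma induction_on_letters {P : F k → Prop} (one : P 1) (letter : ∀ a, P (el k a))
    (mul : ∀ g h, P g → P h → P (g * h)) (g : F k) : P g :=
  FreeGroup.induction_on g one (fun i => letter (i, true)) (fun i _ => letter (i, false)) mul

lemma Cprod_mk (C : L k → ℝ≥0) {l : List (L k)} (hl : IsReduced l) :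
    Cprod k C (FreeGroup.mk l) = (l.map C).prod := by
  rw [Cprod, FreeGroup.toWord_mk, hl.reduce_eq]

lemma one_le_of_Cprod_le {C : L k → ℝ≥0} {M : ℝ≥0} (hM : ∀ w, Cprod k C w ≤ M) : 1 ≤ M := by
  simpa [Cprod] using hM 1

lemma prod_le_mul_prod_invRev {C1 C2 : L k → ℝ≥0} {M : ℝ≥0}
    (hM1 : ∀ w : F k, 1 / M ≤ Cprod k C1 w⁻¹ / Cprod k C2 w) (hM2 : ∀ w, Cprod k C2 w ≤ M)
    {l : List (L k)} (hl : IsReduced l) :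
    (l.map C2).prod ≤ M * ((FreeGroup.invRev l).map C1).prod := by
  rcases eq_or_ne (l.map C2).prod 0 with h0 | h0
  · simp [h0]
  have h := hM1 (FreeGroup.mk l)
  rw [FreeGroup.inv_mk, Cprod_mk C1 (isReduced_invRev hl), Cprod_mk C2 hl,
    div_le_div_iff₀ (zero_lt_one.trans_le (one_le_of_Cprod_le hM2)) (pos_of_ne_zero h0)] at h
  simpa [mul_comm] using h

/-! ### The action of `F` on `∂F` -/

lemma prependAux_append (r₁ r₂ : List (L k)) (x : ℕ → L k) :
    prependAux k (r₁ ++ r₂) x = prependAux k r₂ (prependAux k r₁ x) := by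
  induction r₁ generalizing x with
  | nil => rfl
  | cons a r ih => exact ih _

lemma prependAux_pair {x : ℕ → L k} (hx : Red k x) (c : L k) :
    prependAux k [c, linv k c] x = x := by
  funext n
  by_cases h : x 0 = linv k c
  · have h1 : x 1 ≠ c := by simpa [h] using hx 0
    cases n <;> simp [prependAux, h, h1, shift, cons]
  · cases n <;> simp [prependAux, h, shift, cons]

lemma prependAux_reverse_of_red {x : ℕ → L k} (hx : Red k x) {l₁ l₂ : List (L k)}
    (h : FreeGroup.Red l₁ l₂) : prependAux k l₁.reverse x = prependAux k l₂.reverse x := by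
  induction h with
  | refl => rfl
  | tail _ hstep ih =>
    rw [ih]
    cases hstep with
    | @not s t c b =>
      have hc : ((c, b) : L k) = linv k (c, !b) := by simp [linv]
      simp only [List.reverse_append, List.reverse_cons, List.append_assoc, List.cons_append,
        List.nil_append, prependAux_append]
      rw [hc]
      exact congrArg (prependAux k s.reverse) (prependAux_pair (red_prependAux k _ hx) _)

lemma act_mul (g h : F k) (x : Boundary k) : act k (g * h) x = act k g (act k h x) := by
  apply Subtype.ext
  simp only [act, FreeGroup.toWord_mul, ← prependAux_reverse_of_red x.2 FreeGroup.reduce.red,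
    List.reverse_append, prependAux_append]

instance : MulAction (F k) (Boundary k) where
  smul := act k
  one_smul _ := rfl
  mul_smul := act_mul

lemma el_smul_val (a : L k) (x : Boundary k) :
    (el k a • x).1 = if x.1 0 = linv k a then shift k x.1 else cons k a x.1 := rfl

lemma continuous_coord (i : ℕ) : Continuous fun x : Boundary k => x.1 i :=
  (continuous_apply i).comp continuous_subtype_val

lemma continuous_el_smul (a : L k) : Continuous (el k a • · : Boundary k → Boundary k) := by
  refine continuous_induced_rng.2 ?_
  have hclopen : IsClopen {x : Boundary k | x.1 0 = linv k a} :=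
    (isClopen_discrete {linv k a}).preimage (continuous_coord 0)
  have hshift : Continuous fun x : Boundary k => shift k x.1 :=
    continuous_pi fun n => continuous_coord (n + 1)
  have hcons : Continuous fun x : Boundary k => cons k a x.1 :=
    continuous_pi fun n => by cases n <;> [exact continuous_const; exact continuous_coord _]
  exact hshift.if (fun x hx => by simp [hclopen.frontier_eq] at hx) hcons

instance : ContinuousConstSMul (F k) (Boundary k) :=
  ⟨induction_on_letters (by simp only [one_smul]; exact continuous_id) continuous_el_smul
    fun g h hg hh => by simp only [mul_smul]; exact hg.comp hh⟩

instance : CompactSpace (Boundary k) := by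
  have hclosed : IsClosed {x : ℕ → L k | Red k x} := by
    simp only [Red, Set.ofPred_forall]
    refine isClosed_iInter fun n => ?_
    change IsClosed ((fun x : ℕ → L k => (x (n + 1), x n)) ⁻¹' {p : L k × L k | p.1 ≠ linv k p.2})
    exact (isClosed_discrete _).preimage ((continuous_apply (n + 1)).prodMk (continuous_apply n))
  exact isCompact_iff_compactSpace.mp hclosed.isCompact

instance : SecondCountableTopology (Boundary k) :=
  inferInstanceAs (SecondCountableTopology ({x | Red k x} : Set (ℕ → L k)))

instance : TopologicalSpace.PseudoMetrizableSpace (Boundary k) :=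
  inferInstanceAs (TopologicalSpace.PseudoMetrizableSpace ({x | Red k x} : Set (ℕ → L k)))

/-! ### Cylinders -/

def rayPrefix (x : Boundary k) (n : ℕ) : List (L k) := List.ofFn fun i : Fin n => x.1 i

def wordCyl (l : List (L k)) : Set (Boundary k) := {x | rayPrefix x l.length = l}

@[simp] lemma length_rayPrefix (x : Boundary k) (n : ℕ) : (rayPrefix x n).length = n := by
  simp [rayPrefix]

lemma rayPrefix_succ (x : Boundary k) (n : ℕ) :
    rayPrefix x (n + 1) = x.1 0 :: rayPrefix (Tmap k x) n := by
  simp [rayPrefix, List.ofFn_succ, Tmap, shift]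

lemma rayPrefix_succ' (x : Boundary k) (n : ℕ) :
    rayPrefix x (n + 1) = rayPrefix x n ++ [x.1 n] := by
  rw [rayPrefix, rayPrefix, List.ofFn_succ']
  simp

lemma take_rayPrefix (x : Boundary k) {m n : ℕ} (h : m ≤ n) :
    (rayPrefix x n).take m = rayPrefix x m := by
  apply List.ext_getElem <;> simp [rayPrefix, h]

lemma isReduced_rayPrefix (x : Boundary k) (n : ℕ) : IsReduced (rayPrefix x n) := by
  rw [FreeGroup.IsReduced, rayPrefix, List.isChain_ofFn]
  intro i _
  exact ne_linv_iff.1 (x.2 i)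

lemma mem_wordCyl_rayPrefix (x : Boundary k) (n : ℕ) : x ∈ wordCyl (rayPrefix x n) := by
  simp [wordCyl]

lemma mem_wordCyl_rayPrefix_iff {x y : Boundary k} {n : ℕ} :
    y ∈ wordCyl (rayPrefix x n) ↔ ∀ i < n, y.1 i = x.1 i := by
  simp [wordCyl, rayPrefix, List.ofFn_inj, funext_iff, Fin.forall_iff]

lemma Cyl_eq_wordCyl (v : F k) : Cyl k v = wordCyl v.toWord := by
  ext x
  simp only [Cyl, wordCyl, rayPrefix, Set.mem_ofPred_eq]
  refine ⟨fun h => List.ext_getElem (by simp) fun i _ hi => by simpa using h ⟨i, hi⟩,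
    fun h i => ?_⟩
  simpa using congrArg (·[i]?) h

@[simp] lemma wordCyl_nil : wordCyl ([] : List (L k)) = Set.univ := by
  ext x
  simp [wordCyl, rayPrefix]

lemma mem_wordCyl_cons {a : L k} {l : List (L k)} {x : Boundary k} :
    x ∈ wordCyl (a :: l) ↔ x.1 0 = a ∧ Tmap k x ∈ wordCyl l := by
  simp [wordCyl, rayPrefix_succ]

lemma mem_wordCyl_concat {l : List (L k)} {a : L k} {x : Boundary k} :
    x ∈ wordCyl (l ++ [a]) ↔ x ∈ wordCyl l ∧ x.1 l.length = a := by
  simp [wordCyl, rayPrefix_succ']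

lemma isClopen_wordCyl (l : List (L k)) : IsClopen (wordCyl l) :=
  (isClopen_discrete {f : Fin l.length → L k | List.ofFn f = l}).preimage
    (continuous_pi fun i => continuous_coord i)

lemma measurableSet_wordCyl (l : List (L k)) : MeasurableSet (wordCyl l) :=
  (isClopen_wordCyl l).isOpen.measurableSet

lemma isReduced_of_mem_wordCyl {l : List (L k)} {x : Boundary k} (hx : x ∈ wordCyl l) :
    IsReduced l :=
  hx ▸ isReduced_rayPrefix x _

lemma wordCyl_subset_of_prefix {l₁ l₂ : List (L k)} (h : l₁ <+: l₂) :
    wordCyl l₂ ⊆ wordCyl l₁ := fun x hx => by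
  rw [wordCyl, Set.mem_ofPred_eq, ← take_rayPrefix x h.length_le, hx,
    ← List.prefix_iff_eq_take.1 h]

lemma prefix_of_mem_wordCyl {l₁ l₂ : List (L k)} {x : Boundary k} (h₁ : x ∈ wordCyl l₁)
    (h₂ : x ∈ wordCyl l₂) (hlen : l₁.length ≤ l₂.length) : l₁ <+: l₂ := by
  rw [List.prefix_iff_eq_take, ← h₂, take_rayPrefix x hlen]
  exact h₁.symm

lemma disjoint_wordCyl {l₁ l₂ : List (L k)} (hlen : l₁.length = l₂.length) (hne : l₁ ≠ l₂) :
    Disjoint (wordCyl l₁) (wordCyl l₂) :=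
  Set.disjoint_left.2 fun _ h₁ h₂ => hne (h₁.symm.trans (hlen ▸ h₂))

lemma wordCyl_rayPrefix_antitone (x : Boundary k) : Antitone fun n => wordCyl (rayPrefix x n) :=
  fun _ _ hmn _ hy => mem_wordCyl_rayPrefix_iff.2 fun i hi =>
    mem_wordCyl_rayPrefix_iff.1 hy i (hi.trans_le hmn)

lemma exists_wordCyl_rayPrefix_subset {U : Set (Boundary k)} {x : Boundary k} (hU : U ∈ 𝓝 x) :
    ∃ n, wordCyl (rayPrefix x n) ⊆ U := by
  obtain ⟨V, hVU, hV, hxV⟩ := mem_nhds_iff.1 hU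
  obtain ⟨V', hV', rfl⟩ := isOpen_induced_iff.1 hV
  obtain ⟨I, u, hIu, hIsub⟩ := isOpen_pi_iff.1 hV' x.1 hxV
  refine ⟨I.sup id + 1, fun y hy => hVU (hIsub fun i hi => ?_)⟩
  have hyx : y.1 i = x.1 i :=
    mem_wordCyl_rayPrefix_iff.1 hy i (Nat.lt_succ_of_le (Finset.le_sup (f := id) hi))
  exact hyx ▸ (hIu i hi).2

/-! ### Translates of cylinders -/

def noCancel (l : List (L k)) : Set (Boundary k) := {x | IsReduced (l ++ [x.1 0])}

lemma measurableSet_noCancel (l : List (L k)) : MeasurableSet (noCancel l) :=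
  ((isClopen_discrete {c | IsReduced (l ++ [c])}).preimage (continuous_coord 0)).isOpen.measurableSet

lemma mem_noCancel_singleton {a : L k} {x : Boundary k} :
    x ∈ noCancel [a] ↔ x.1 0 ≠ linv k a :=
  isReduced_pair

@[simp] lemma noCancel_nil : noCancel ([] : List (L k)) = Set.univ := by
  ext
  simp [noCancel]

lemma noCancel_append {r s : List (L k)} (h : IsReduced (r ++ s)) (hs : s ≠ []) :
    noCancel (r ++ s) = noCancel s := by
  ext x
  simp only [noCancel, Set.mem_ofPred_eq, List.append_assoc]
  exact ⟨fun hx => hx.infix ⟨r, [], by simp⟩, fun hx => by simpa using h.append_overlap hx hs⟩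

lemma wordCyl_subset_noCancel {r s : List (L k)} (h : IsReduced (r ++ s)) (hs : s ≠ []) :
    wordCyl s ⊆ noCancel r := by
  obtain ⟨a, s', rfl⟩ := List.exists_cons_of_ne_nil hs
  intro x hx
  show IsReduced (r ++ [x.1 0])
  rw [(mem_wordCyl_cons.1 hx).1]
  exact h.infix ⟨[], s', by simp⟩

lemma mem_noCancel_iff_ne {r s : List (L k)} (hr : IsReduced r) (hr0 : r ≠ [])
    {x y : Boundary k} (hy : y ∈ wordCyl (FreeGroup.invRev r ++ s)) :
    x ∈ noCancel r ↔ x.1 0 ≠ y.1 0 := by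
  obtain ⟨r', c, rfl⟩ := (List.eq_nil_or_concat' r).resolve_left hr0
  rw [invRev_concat, List.cons_append, mem_wordCyl_cons] at hy
  rw [noCancel_append hr (List.cons_ne_nil _ _), mem_noCancel_singleton, hy.1]

lemma el_smul_of_mem_noCancel {a : L k} {x : Boundary k} (hx : x ∈ noCancel [a]) :
    (el k a • x).1 = cons k a x.1 := by
  rw [el_smul_val, if_neg (mem_noCancel_singleton.1 hx)]

lemma el_smul_eq {a : L k} {E : Set (Boundary k)} (hE : E ⊆ noCancel [a]) :
    el k a • E = {y | y.1 0 = a ∧ Tmap k y ∈ E} := by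
  ext y
  constructor
  · rintro ⟨x, hx, rfl⟩
    have h := el_smul_of_mem_noCancel (hE hx)
    refine ⟨by simp only [h]; rfl, ?_⟩
    convert hx
    exact Subtype.ext (by simp only [Tmap, h]; rfl)
  · rintro ⟨hy0, hy⟩
    refine ⟨Tmap k y, hy, Subtype.ext ?_⟩
    rw [el_smul_of_mem_noCancel (hE hy)]
    funext n
    cases n
    exacts [hy0.symm, rfl]

lemma el_smul_noCancel (a : L k) : el k a • noCancel [a] = wordCyl [a] := by
  ext y
  rw [el_smul_eq subset_rfl, mem_wordCyl_cons, wordCyl_nil]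
  simp only [Set.mem_ofPred_eq, mem_noCancel_singleton, Set.mem_univ, and_true]
  exact ⟨And.left, fun h => ⟨h, h ▸ y.2 0⟩⟩

lemma mk_smul_wordCyl {r s : List (L k)} (h : IsReduced (r ++ s)) (hs : s ≠ []) :
    FreeGroup.mk r • wordCyl s = wordCyl (r ++ s) := by
  induction r with
  | nil => simp [← FreeGroup.one_eq_mk]
  | cons a r ih =>
    have hrs : IsReduced (r ++ s) := h.infix ⟨[a], [], by simp⟩
    rw [← List.singleton_append, ← FreeGroup.mul_mk, mul_smul, ih hrs,
      show FreeGroup.mk [a] = el k a from rfl,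
      el_smul_eq (wordCyl_subset_noCancel (r := [a]) (s := r ++ s) h (by simp [hs]))]
    ext y
    simp [mem_wordCyl_cons]

lemma mk_smul_noCancel {l : List (L k)} (h : IsReduced l) :
    FreeGroup.mk l • noCancel l = wordCyl l := by
  rcases List.eq_nil_or_concat' l with rfl | ⟨r, a, rfl⟩
  · simp [← FreeGroup.one_eq_mk]
  · rw [noCancel_append h (List.cons_ne_nil _ _), ← FreeGroup.mul_mk, mul_smul,
      show FreeGroup.mk [a] = el k a from rfl, el_smul_noCancel,
      mk_smul_wordCyl h (List.cons_ne_nil _ _)]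

lemma compl_Cyl_el_linv (a : L k) : (Cyl k (el k (linv k a)))ᶜ = noCancel [a] := by
  ext x
  rw [Cyl_eq_wordCyl, el, FreeGroup.toWord_mk, FreeGroup.reduce_singleton, Set.mem_compl_iff,
    mem_wordCyl_cons, mem_noCancel_singleton]
  simp

lemma actPair_image_prod (g : F k) (A B : Set (Boundary k)) :
    actPair k g '' A ×ˢ B = (g • A) ×ˢ (g • B) :=
  Set.prod_image_image_eq.symm

lemma Cyl2_mk_branch {l u w : List (L k)} {a b : L k} (hab : a ≠ b)
    (hu : IsReduced (l ++ a :: u)) (hw : IsReduced (l ++ b :: w)) :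
    Cyl2 k (FreeGroup.mk (l ++ a :: u)) (FreeGroup.mk (l ++ b :: w)) =
      wordCyl (l ++ a :: u) ×ˢ wordCyl (l ++ b :: w) := by
  have hau : IsReduced (a :: u) := hu.infix ⟨l, [], by simp⟩
  have hz := isReduced_invRev_append hab hau (hw.infix ⟨l, [], List.append_nil _⟩)
  have hbase : baseCyl k (FreeGroup.mk (FreeGroup.invRev (a :: u) ++ b :: w)) =
      noCancel (a :: u) ×ˢ wordCyl (FreeGroup.invRev (a :: u) ++ b :: w) := by
    ext p
    simp only [baseCyl, Cyl_eq_wordCyl, FreeGroup.toWord_mk, hz.reduce_eq, Set.mem_prod,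
      Set.mem_ofPred_eq]
    exact ⟨fun h => ⟨(mem_noCancel_iff_ne hau (List.cons_ne_nil _ _) h.2).2 h.1, h.2⟩,
      fun h => ⟨(mem_noCancel_iff_ne hau (List.cons_ne_nil _ _) h.2).1 h.1, h.2⟩⟩
  rw [Cyl2, inv_mk_append_mul_mk_append, hbase, actPair_image_prod]
  congr 1
  · rw [← noCancel_append hu (List.cons_ne_nil _ _)]
    exact mk_smul_noCancel hu
  · rw [← mk_smul_wordCyl hz (List.cons_ne_nil _ _)]
    change FreeGroup.mk (l ++ a :: u) • FreeGroup.mk (FreeGroup.invRev (a :: u)) • _ = _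
    rw [smul_smul, ← FreeGroup.mul_mk, mul_assoc, ← FreeGroup.inv_mk, mul_inv_cancel, mul_one,
      mk_smul_wordCyl hw (List.cons_ne_nil _ _)]

/-! ### Comparing measures on cylinder rectangles -/

def cellsIn (V : Set (Boundary k × Boundary k)) (n : ℕ) : Set (List (L k) × List (L k)) :=
  {t | t.1.length = n ∧ t.2.length = n ∧ wordCyl t.1 ×ˢ wordCyl t.2 ⊆ V}

lemma mem_biUnion_cellsIn {V : Set (Boundary k × Boundary k)} {n : ℕ}
    {p : Boundary k × Boundary k} :
    p ∈ ⋃ t ∈ cellsIn V n, wordCyl t.1 ×ˢ wordCyl t.2 ↔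
      wordCyl (rayPrefix p.1 n) ×ˢ wordCyl (rayPrefix p.2 n) ⊆ V := by
  simp only [Set.mem_iUnion, exists_prop]
  constructor
  · rintro ⟨t, ⟨rfl, h₂, hV⟩, hp₁, hp₂⟩
    have e₁ : rayPrefix p.1 t.1.length = t.1 := hp₁
    have e₂ : rayPrefix p.2 t.2.length = t.2 := hp₂
    rwa [e₁, ← h₂, e₂]
  · exact fun hV => ⟨(rayPrefix p.1 n, rayPrefix p.2 n),
      ⟨length_rayPrefix _ _, length_rayPrefix _ _, hV⟩,
      mem_wordCyl_rayPrefix _ _, mem_wordCyl_rayPrefix _ _⟩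

section Extension

variable {κ ν : Measure (Boundary k × Boundary k)}

lemma measure_le_of_isOpen (N : ℕ)
    (h : ∀ l₁ l₂ : List (L k), N ≤ l₁.length → l₁.length = l₂.length →
      κ (wordCyl l₁ ×ˢ wordCyl l₂) ≤ ν (wordCyl l₁ ×ˢ wordCyl l₂))
    {V : Set (Boundary k × Boundary k)} (hV : IsOpen V) : κ V ≤ ν V := by
  set W := fun n => ⋃ t ∈ cellsIn V (N + n), wordCyl t.1 ×ˢ wordCyl t.2
  have hWV : ∀ n, W n ⊆ V := fun n => Set.iUnion₂_subset fun t ht => ht.2.2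
  have hmono : Monotone W := fun m n hmn p hp => mem_biUnion_cellsIn.2 <|
    (Set.prod_mono (wordCyl_rayPrefix_antitone p.1 (by omega))
      (wordCyl_rayPrefix_antitone p.2 (by omega))).trans (mem_biUnion_cellsIn.1 hp)
  have hcover : ⋃ n, W n = V := by
    refine (Set.iUnion_subset hWV).antisymm fun p hp => ?_
    obtain ⟨U₁, hU₁, U₂, hU₂, hU⟩ := mem_nhds_prod_iff.1 (hV.mem_nhds hp)
    obtain ⟨n₁, hn₁⟩ := exists_wordCyl_rayPrefix_subset hU₁
    obtain ⟨n₂, hn₂⟩ := exists_wordCyl_rayPrefix_subset hU₂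
    refine Set.mem_iUnion.2 ⟨max n₁ n₂, mem_biUnion_cellsIn.2 ((Set.prod_mono ?_ ?_).trans hU)⟩
    · exact (wordCyl_rayPrefix_antitone p.1 (by omega)).trans hn₁
    · exact (wordCyl_rayPrefix_antitone p.2 (by omega)).trans hn₂
  have hdisj : ∀ n, (cellsIn V n).PairwiseDisjoint fun t => wordCyl t.1 ×ˢ wordCyl t.2 := by
    rintro n t ⟨ht₁, ht₂, -⟩ t' ⟨ht₁', ht₂', -⟩ hne
    by_cases h₁ : t.1 = t'.1
    · exact Set.disjoint_prod.2 (Or.inr (disjoint_wordCyl (ht₂.trans ht₂'.symm)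
        fun h₂ => hne (Prod.ext h₁ h₂)))
    · exact Set.disjoint_prod.2 (Or.inl (disjoint_wordCyl (ht₁.trans ht₁'.symm) h₁))
  have hmeas : ∀ t : List (L k) × List (L k), MeasurableSet (wordCyl t.1 ×ˢ wordCyl t.2) :=
    fun t => (measurableSet_wordCyl _).prod (measurableSet_wordCyl _)
  have hcell : ∀ n, κ (W n) ≤ ν (W n) := fun n => by
    simp only [W, measure_biUnion (Set.to_countable _) (hdisj _) fun t _ => hmeas t]
    exact ENNReal.tsum_le_tsum fun t =>
      h _ _ ((Nat.le_add_right N n).trans_eq t.2.1.symm) (t.2.1.trans t.2.2.1.symm)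
  calc κ V = ⨆ n, κ (W n) := by rw [← hcover, hmono.measure_iUnion]
    _ ≤ ν V := iSup_le fun n => (hcell n).trans (measure_mono (hWV n))

lemma le_of_measure_wordCyl_prod_le [IsFiniteMeasure ν] (N : ℕ)
    (h : ∀ l₁ l₂ : List (L k), N ≤ l₁.length → l₁.length = l₂.length →
      κ (wordCyl l₁ ×ˢ wordCyl l₂) ≤ ν (wordCyl l₁ ×ˢ wordCyl l₂)) : κ ≤ ν := by
  refine Measure.le_iff.2 fun s _ => ?_
  rw [Set.measure_eq_iInf_isOpen s ν]
  exact le_iInf₂ fun U hsU => le_iInf fun hU =>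
    (measure_mono hsU).trans (measure_le_of_isOpen N h hU)

end Extension

/-! ### Splitting a pair of rays at its branch point -/

lemma subset_D2_of_disjoint {E S : Set (Boundary k)} (h : Disjoint E S) : E ×ˢ S ⊆ D2 k :=
  fun _ hp hp' => Set.disjoint_left.1 h hp.1 (hp' ▸ hp.2)

/-- Meaningful only on `D2 k`: for `p.1 = p.2` the infimum is taken over `∅` and is `0`. -/
def branchPoint (p : Boundary k × Boundary k) : List (L k) × L k × L k :=
  let n := sInf {i | p.1.1 i ≠ p.2.1 i}
  (rayPrefix p.1 n, p.1.1 n, p.2.1 n)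

def branchCell (t : List (L k) × L k × L k) : Set (Boundary k × Boundary k) :=
  wordCyl (t.1 ++ [t.2.1]) ×ˢ wordCyl (t.1 ++ [t.2.2])

lemma mem_branchCell_branchPoint {p : Boundary k × Boundary k} (hp : p ∈ D2 k) :
    p ∈ branchCell (branchPoint p) ∧ (branchPoint p).2.1 ≠ (branchPoint p).2.2 := by
  have hne : {i | p.1.1 i ≠ p.2.1 i}.Nonempty := by
    by_contra h
    refine hp (Subtype.ext (funext fun i => ?_))
    by_contra hi
    exact h ⟨i, hi⟩
  set n := sInf {i | p.1.1 i ≠ p.2.1 i}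
  have hagree : ∀ i < n, p.2.1 i = p.1.1 i := fun i hi =>
    (not_not.1 (Nat.notMem_of_lt_sInf hi)).symm
  refine ⟨⟨?_, mem_wordCyl_concat.2 ⟨mem_wordCyl_rayPrefix_iff.2 hagree, by simp [branchPoint]⟩⟩,
    Nat.sInf_mem hne⟩
  rw [branchPoint, ← rayPrefix_succ']
  exact mem_wordCyl_rayPrefix _ _

lemma branchPoint_eq {t : List (L k) × L k × L k} (ht : t.2.1 ≠ t.2.2)
    {p : Boundary k × Boundary k} (hp : p ∈ branchCell t) : branchPoint p = t := by
  obtain ⟨l, a, b⟩ := t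
  obtain ⟨hl₁, ha⟩ := mem_wordCyl_concat.1 hp.1
  obtain ⟨hl₂, hb⟩ := mem_wordCyl_concat.1 hp.2
  have hl : rayPrefix p.1 l.length = l := hl₁
  have hn : sInf {i | p.1.1 i ≠ p.2.1 i} = l.length := by
    refine IsLeast.csInf_eq ⟨by simpa [ha, hb] using ht, fun i hi => not_lt.1 fun hlt => hi ?_⟩
    exact (mem_wordCyl_rayPrefix_iff.1 (by rw [hl]; exact hl₂) i hlt).symm
  simp only [branchPoint, hn, ha, hb, hl]

/-! ### Measures with bounded distortion under letters -/

variable (k) in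
def LetterBounds (μ : Measure (Boundary k)) (C1 C2 : L k → ℝ≥0) : Prop :=
  ∀ a : L k, ∀ E : Set (Boundary k), MeasurableSet E →
      E ⊆ (Cyl k (el k (linv k a)))ᶜ →
      (C1 a : ℝ≥0∞) * μ E ≤ μ (act k (el k a) '' E) ∧
        μ (act k (el k a) '' E) ≤ (C2 a : ℝ≥0∞) * μ E

namespace LetterBounds

variable {μ : Measure (Boundary k)} {C1 C2 : L k → ℝ≥0}

lemma el_smul (hμ : LetterBounds k μ C1 C2) {a : L k} {E : Set (Boundary k)}
    (hE : MeasurableSet E) (hsub : E ⊆ noCancel [a]) :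
    (C1 a : ℝ≥0∞) * μ E ≤ μ (el k a • E) ∧ μ (el k a • E) ≤ (C2 a : ℝ≥0∞) * μ E :=
  hμ a E hE (by rwa [compl_Cyl_el_linv])

lemma mk_smul (hμ : LetterBounds k μ C1 C2) {l : List (L k)} (hl : IsReduced l)
    {E : Set (Boundary k)} (hE : MeasurableSet E) (hsub : E ⊆ noCancel l) :
    ((l.map C1).prod : ℝ≥0∞) * μ E ≤ μ (FreeGroup.mk l • E) ∧
      μ (FreeGroup.mk l • E) ≤ ((l.map C2).prod : ℝ≥0∞) * μ E := by
  induction l using List.reverseRecOn generalizing E with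
  | nil => simp [← FreeGroup.one_eq_mk]
  | append_singleton r a ih =>
    rw [noCancel_append hl (List.cons_ne_nil _ _)] at hsub
    obtain ⟨ha1, ha2⟩ := hμ.el_smul hE hsub
    have hsub' : el k a • E ⊆ noCancel r :=
      (Set.smul_set_mono hsub).trans ((el_smul_noCancel a).subset.trans
        (wordCyl_subset_noCancel hl (List.cons_ne_nil _ _)))
    obtain ⟨h1, h2⟩ := ih (hl.infix ⟨[], [a], by simp⟩) (hE.const_smul _) hsub'
    rw [← FreeGroup.mul_mk, mul_smul]
    simp only [List.map_append, List.prod_append, List.map_singleton, List.prod_singleton,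
      ENNReal.coe_mul, mul_assoc]
    exact ⟨(mul_le_mul_right ha1 _).trans h1, h2.trans (mul_le_mul_right ha2 _)⟩

lemma le_measure_el_smul (hμ : LetterBounds k μ C1 C2) (a : L k) {E : Set (Boundary k)}
    (hE : MeasurableSet E) :
    min (C1 a : ℝ≥0∞) (C2 (linv k a) : ℝ≥0∞)⁻¹ * μ E ≤ μ (el k a • E) := by
  have hN := measurableSet_noCancel (k := k) [a]
  set E₁ := E ∩ noCancel [a]
  set E₂ := E \ noCancel [a]
  have hcancel : el k a • E₂ ⊆ noCancel [linv k a] := by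
    rintro _ ⟨x, hx, rfl⟩
    have hx0 : x.1 0 = linv k a := by simpa [mem_noCancel_singleton] using hx.2
    rw [mem_noCancel_singleton, linv_linv, el_smul_val, if_pos hx0]
    simpa [hx0, shift] using x.2 0
  have h₁ := (hμ.el_smul (hE.inter hN) Set.inter_subset_right).1
  have h₂ : μ E₂ ≤ C2 (linv k a) * μ (el k a • E₂) := by
    simpa [el_linv] using (hμ.el_smul ((hE.diff hN).const_smul _) hcancel).2
  calc min (C1 a : ℝ≥0∞) (C2 (linv k a) : ℝ≥0∞)⁻¹ * μ E
      = min (C1 a : ℝ≥0∞) (C2 (linv k a) : ℝ≥0∞)⁻¹ * μ E₁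
        + min (C1 a : ℝ≥0∞) (C2 (linv k a) : ℝ≥0∞)⁻¹ * μ E₂ := by
        rw [← mul_add, measure_inter_add_sdiff _ hN]
    _ ≤ C1 a * μ E₁ + (C2 (linv k a) : ℝ≥0∞)⁻¹ * μ E₂ := by gcongr <;> simp
    _ ≤ μ (el k a • E₁) + μ (el k a • E₂) := by
        gcongr
        rw [← ENNReal.div_eq_inv_mul]
        exact ENNReal.div_le_of_le_mul' h₂
    _ = μ (el k a • E) := by
        rw [← measure_union (Set.disjoint_smul_set.2 Set.disjoint_sdiff_inter.symm)
          ((hE.diff hN).const_smul _), ← Set.smul_set_union, Set.inter_union_sdiff]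

lemma exists_le_measure_smul (hμ : LetterBounds k μ C1 C2) (hC1 : ∀ a, 0 < C1 a) (g : F k) :
    ∃ b : ℝ≥0∞, 0 < b ∧ ∀ E : Set (Boundary k), MeasurableSet E → b * μ E ≤ μ (g • E) := by
  induction g using induction_on_letters with
  | one => exact ⟨1, one_pos, fun E _ => by simp⟩
  | letter a =>
    refine ⟨_, ?_, fun E hE => hμ.le_measure_el_smul a hE⟩
    exact lt_min (by exact_mod_cast hC1 a) (ENNReal.inv_pos.2 ENNReal.coe_ne_top)
  | mul g h hg hh =>
    obtain ⟨b, hb, hbE⟩ := hg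
    obtain ⟨b', hb', hb'E⟩ := hh
    refine ⟨b * b', ENNReal.mul_pos hb.ne' hb'.ne', fun E hE => ?_⟩
    rw [mul_assoc, mul_smul]
    exact (mul_le_mul_right (hb'E E hE) b).trans (hbE _ (hE.const_smul h))

lemma measure_wordCyl_le (hμ : LetterBounds k μ C1 C2) {l : List (L k)} (hl : IsReduced l) :
    μ (wordCyl l) ≤ ((l.map C2).prod : ℝ≥0∞) * μ Set.univ := by
  rw [← mk_smul_noCancel hl]
  exact (hμ.mk_smul hl (measurableSet_noCancel l) subset_rfl).2.trans
    (mul_le_mul_right (measure_mono (Set.subset_univ _)) _)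

lemma measure_wordCyl_append (hμ : LetterBounds k μ C1 C2) {r s : List (L k)}
    (h : IsReduced (r ++ s)) (hs : s ≠ []) :
    ((r.map C1).prod : ℝ≥0∞) * μ (wordCyl s) ≤ μ (wordCyl (r ++ s)) ∧
      μ (wordCyl (r ++ s)) ≤ ((r.map C2).prod : ℝ≥0∞) * μ (wordCyl s) := by
  rw [← mk_smul_wordCyl h hs]
  exact hμ.mk_smul (h.infix ⟨[], s, by simp⟩) (measurableSet_wordCyl s)
    (wordCyl_subset_noCancel h hs)

section Current

variable {η : Measure (Boundary k × Boundary k)} {M : ℝ≥0}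

lemma measure_mul_measure_le_current (hμ : LetterBounds k μ C1 C2)
    (hcorr : ∀ x y : F k, x ≠ y → η (Cyl2 k x y) = μ (Cyl k (x⁻¹ * y)))
    (hM1 : ∀ w : F k, 1 / M ≤ Cprod k C1 w⁻¹ / Cprod k C2 w) (hM2 : ∀ w, Cprod k C2 w ≤ M)
    {l u w : List (L k)} {a b : L k} (hab : a ≠ b)
    (hu : IsReduced (l ++ a :: u)) (hw : IsReduced (l ++ b :: w)) :
    μ (wordCyl (l ++ a :: u)) * μ (wordCyl (l ++ b :: w)) ≤
      (M : ℝ≥0∞) ^ 3 * μ Set.univ * η (wordCyl (l ++ a :: u) ×ˢ wordCyl (l ++ b :: w)) := by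
  have hl : IsReduced l := hu.infix ⟨[], a :: u, by simp⟩
  have hau : IsReduced (a :: u) := hu.infix ⟨l, [], List.append_nil _⟩
  have hz := isReduced_invRev_append hab hau (hw.infix ⟨l, [], List.append_nil _⟩)
  have hne : FreeGroup.mk (l ++ a :: u) ≠ FreeGroup.mk (l ++ b :: w) := fun h => by
    have h' := congrArg FreeGroup.toWord h
    rw [FreeGroup.toWord_mk, FreeGroup.toWord_mk, hu.reduce_eq, hw.reduce_eq] at h'
    exact hab (List.cons.inj (List.append_cancel_left h')).1
  have hη : η (wordCyl (l ++ a :: u) ×ˢ wordCyl (l ++ b :: w)) =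
      μ (wordCyl (FreeGroup.invRev (a :: u) ++ b :: w)) := by
    rw [← Cyl2_mk_branch hab hu hw, hcorr _ _ hne, inv_mk_append_mul_mk_append, Cyl_eq_wordCyl,
      FreeGroup.toWord_mk, hz.reduce_eq]
  have hCl : ((l.map C2).prod : ℝ≥0∞) ≤ M := by
    exact_mod_cast Cprod_mk C2 hl ▸ hM2 (FreeGroup.mk l)
  have hCau : (((a :: u).map C2).prod : ℝ≥0∞) ≤
      M * (((FreeGroup.invRev (a :: u)).map C1).prod : ℝ≥0∞) := by
    exact_mod_cast prod_le_mul_prod_invRev hM1 hM2 hau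
  set C := (((FreeGroup.invRev (a :: u)).map C1).prod : ℝ≥0∞)
  have hX : μ (wordCyl (l ++ a :: u)) ≤ M * (M * C * μ Set.univ) :=
    (hμ.measure_wordCyl_append hu (List.cons_ne_nil _ _)).2.trans
      (mul_le_mul' hCl ((hμ.measure_wordCyl_le hau).trans (mul_le_mul_left hCau _)))
  have hY : μ (wordCyl (l ++ b :: w)) ≤ M * μ (wordCyl (b :: w)) :=
    (hμ.measure_wordCyl_append hw (List.cons_ne_nil _ _)).2.trans (mul_le_mul_left hCl _)
  calc μ (wordCyl (l ++ a :: u)) * μ (wordCyl (l ++ b :: w))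
      ≤ M * (M * C * μ Set.univ) * (M * μ (wordCyl (b :: w))) := mul_le_mul' hX hY
    _ = (M : ℝ≥0∞) ^ 3 * μ Set.univ * (C * μ (wordCyl (b :: w))) := by ring
    _ ≤ (M : ℝ≥0∞) ^ 3 * μ Set.univ * η (wordCyl (l ++ a :: u) ×ˢ wordCyl (l ++ b :: w)) := by
      rw [hη]
      exact mul_le_mul_right (hμ.measure_wordCyl_append hz (List.cons_ne_nil _ _)).1 _

lemma smul_prod_restrict_le_restrict [SFinite μ] (hμ : LetterBounds k μ C1 C2)
    (hη : ∀ K, K ⊆ D2 k → IsCompact K → η K < ⊤)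
    (hcorr : ∀ x y : F k, x ≠ y → η (Cyl2 k x y) = μ (Cyl k (x⁻¹ * y)))
    (hM1 : ∀ w : F k, 1 / M ≤ Cprod k C1 w⁻¹ / Cprod k C2 w) (hM2 : ∀ w, Cprod k C2 w ≤ M)
    {l : List (L k)} {a b : L k} (hab : a ≠ b) :
    ((M : ℝ≥0∞) ^ 3 * μ Set.univ)⁻¹ •
        (μ.restrict (wordCyl (l ++ [a]))).prod (μ.restrict (wordCyl (l ++ [b]))) ≤
      η.restrict (wordCyl (l ++ [a]) ×ˢ wordCyl (l ++ [b])) := by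
  set A := wordCyl (l ++ [a])
  set B := wordCyl (l ++ [b])
  have hAB : A ×ˢ B ⊆ D2 k :=
    subset_D2_of_disjoint (disjoint_wordCyl (by simp) (by simpa using hab))
  have : IsFiniteMeasure (η.restrict (A ×ˢ B)) := ⟨by
    rw [Measure.restrict_apply_univ]
    exact hη _ hAB ((isClopen_wordCyl _).isClosed.isCompact.prod
      (isClopen_wordCyl _).isClosed.isCompact)⟩
  refine le_of_measure_wordCyl_prod_le (l.length + 1) fun l₁ l₂ hN hlen => ?_
  rw [Measure.smul_apply, Measure.prod_prod, Measure.restrict_apply (measurableSet_wordCyl _),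
    Measure.restrict_apply (measurableSet_wordCyl _),
    Measure.restrict_apply ((measurableSet_wordCyl _).prod (measurableSet_wordCyl _)),
    Set.prod_inter_prod, smul_eq_mul]
  rcases (wordCyl l₁ ∩ A).eq_empty_or_nonempty with h₁ | ⟨x, hx₁, hxA⟩
  · simp [h₁]
  rcases (wordCyl l₂ ∩ B).eq_empty_or_nonempty with h₂ | ⟨y, hy₂, hyB⟩
  · simp [h₂]
  obtain ⟨u, rfl⟩ := prefix_of_mem_wordCyl hxA hx₁ (by simp; omega)
  obtain ⟨w, rfl⟩ := prefix_of_mem_wordCyl hyB hy₂ (by simp; omega)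
  rw [Set.inter_eq_left.2 (wordCyl_subset_of_prefix (List.prefix_append _ _)),
    Set.inter_eq_left.2 (wordCyl_subset_of_prefix (List.prefix_append _ _))]
  simp only [List.append_assoc, List.singleton_append] at hx₁ hy₂ ⊢
  calc _ ≤ ((M : ℝ≥0∞) ^ 3 * μ Set.univ)⁻¹ * ((M : ℝ≥0∞) ^ 3 * μ Set.univ *
        η (wordCyl (l ++ a :: u) ×ˢ wordCyl (l ++ b :: w))) :=
        mul_le_mul_right (hμ.measure_mul_measure_le_current hcorr hM1 hM2 hab
          (isReduced_of_mem_wordCyl hx₁) (isReduced_of_mem_wordCyl hy₂)) _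
    _ ≤ _ := by
        rw [← mul_assoc]
        exact mul_le_of_le_one_left' (ENNReal.inv_mul_le_one _)

lemma le_current_of_subset_wordCyl [SFinite μ] (hμ : LetterBounds k μ C1 C2)
    (hη : ∀ K, K ⊆ D2 k → IsCompact K → η K < ⊤)
    (hcorr : ∀ x y : F k, x ≠ y → η (Cyl2 k x y) = μ (Cyl k (x⁻¹ * y)))
    (hM1 : ∀ w : F k, 1 / M ≤ Cprod k C1 w⁻¹ / Cprod k C2 w) (hM2 : ∀ w, Cprod k C2 w ≤ M)
    {l : List (L k)} {a b : L k} (hab : a ≠ b) {X Y : Set (Boundary k)}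
    (hX : MeasurableSet X) (hY : MeasurableSet Y)
    (hXa : X ⊆ wordCyl (l ++ [a])) (hYb : Y ⊆ wordCyl (l ++ [b])) :
    ((M : ℝ≥0∞) ^ 3 * μ Set.univ)⁻¹ * (μ X * μ Y) ≤ η (X ×ˢ Y) := by
  have h := Measure.le_iff'.1
    (hμ.smul_prod_restrict_le_restrict (l := l) hη hcorr hM1 hM2 hab) (X ×ˢ Y)
  rwa [Measure.smul_apply, Measure.prod_prod, Measure.restrict_apply hX,
    Measure.restrict_apply hY, Measure.restrict_apply (hX.prod hY), Set.inter_eq_left.2 hXa,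
    Set.inter_eq_left.2 hYb, Set.inter_eq_left.2 (Set.prod_mono hXa hYb), smul_eq_mul] at h

lemma le_current_prod [SFinite μ] (hμ : LetterBounds k μ C1 C2)
    (hη : ∀ K, K ⊆ D2 k → IsCompact K → η K < ⊤)
    (hcorr : ∀ x y : F k, x ≠ y → η (Cyl2 k x y) = μ (Cyl k (x⁻¹ * y)))
    (hM1 : ∀ w : F k, 1 / M ≤ Cprod k C1 w⁻¹ / Cprod k C2 w) (hM2 : ∀ w, Cprod k C2 w ≤ M)
    {E S : Set (Boundary k)} (hE : MeasurableSet E) (hS : MeasurableSet S) (hES : Disjoint E S) :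
    ((M : ℝ≥0∞) ^ 3 * μ Set.univ)⁻¹ * (μ E * μ S) ≤ η (E ×ˢ S) := by
  set T := {t : List (L k) × L k × L k | t.2.1 ≠ t.2.2}
  have hcover : E ×ˢ S = ⋃ t ∈ T, (E ×ˢ S) ∩ branchCell t := by
    refine subset_antisymm (fun p hp => ?_) (Set.iUnion₂_subset fun _ _ => Set.inter_subset_left)
    obtain ⟨hcell, hne⟩ := mem_branchCell_branchPoint (subset_D2_of_disjoint hES hp)
    exact Set.mem_biUnion hne ⟨hp, hcell⟩
  have hdisj : T.PairwiseDisjoint fun t => (E ×ˢ S) ∩ branchCell t :=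
    fun t ht t' ht' hne => Set.disjoint_left.2 fun p hp hp' =>
      hne ((branchPoint_eq ht hp.2).symm.trans (branchPoint_eq ht' hp'.2))
  have hmeas : ∀ t ∈ T, MeasurableSet ((E ×ˢ S) ∩ branchCell t) := fun t _ =>
    (hE.prod hS).inter ((measurableSet_wordCyl _).prod (measurableSet_wordCyl _))
  rw [← Measure.prod_prod, hcover, measure_biUnion (Set.to_countable _) hdisj hmeas,
    measure_biUnion (Set.to_countable _) hdisj hmeas, ← ENNReal.tsum_mul_left]
  refine ENNReal.tsum_le_tsum fun t => ?_
  rw [branchCell, Set.prod_inter_prod, Measure.prod_prod]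
  exact hμ.le_current_of_subset_wordCyl hη hcorr hM1 hM2 t.2 (hE.inter (measurableSet_wordCyl _))
    (hS.inter (measurableSet_wordCyl _)) Set.inter_subset_right Set.inter_subset_right

end Current

end LetterBounds

end Development

theorem criterion_for_length_compactness_general (k : ℕ)
    (η : Measure (Boundary k × Boundary k)) (hη : IsCurrent k η)
    (μ : Measure (Boundary k)) [IsFiniteMeasure μ]
    (hcorr : ∀ x y : F k, x ≠ y → η (Cyl2 k x y) = μ (Cyl k (x⁻¹ * y)))
    (C1 C2 : L k → ℝ≥0) (hC1 : ∀ a, 0 < C1 a)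
    (hbound : ∀ a : L k, ∀ E : Set (Boundary k), MeasurableSet E →
      E ⊆ (Cyl k (el k (linv k a)))ᶜ →
      (C1 a : ℝ≥0∞) * μ E ≤ μ (act k (el k a) '' E) ∧
        μ (act k (el k a) '' E) ≤ (C2 a : ℝ≥0∞) * μ E)
    (M : ℝ≥0) (hM1 : ∀ w : F k, 1 / M ≤ Cprod k C1 w⁻¹ / Cprod k C2 w)
    (hM2 : ∀ w : F k, Cprod k C2 w ≤ M) :
    ∃ c : ℝ≥0∞, 0 < c ∧ ∀ f : F k, ∃ b : ℝ≥0∞, 0 < b ∧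
      ∀ E S : Set (Boundary k), MeasurableSet E → MeasurableSet S → Disjoint E S →
        b * μ E ≤ μ (act k f '' E) ∧ c * (μ E * μ S) ≤ η ((E ×ˢ S) ∩ D2 k) := by
  have hμ : LetterBounds k μ C1 C2 := hbound
  refine ⟨((M : ℝ≥0∞) ^ 3 * μ Set.univ)⁻¹,
    ENNReal.inv_pos.2 (ENNReal.mul_ne_top (by simp) (measure_ne_top μ _)), fun f => ?_⟩
  obtain ⟨b, hb, hbE⟩ := hμ.exists_le_measure_smul hC1 f
  refine ⟨b, hb, fun E S hE hS hES => ⟨hbE E hE, ?_⟩⟩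
  rw [Set.inter_eq_left.2 (subset_D2_of_disjoint hES)]
  exact hμ.le_current_prod hη.2.2 hcorr hM1 hM2 hE hS hES

theorem criterion_for_length_compactness (k : ℕ) (hk : 2 ≤ k)
    (η : Measure (Boundary k × Boundary k)) (hη : IsCurrent k η)
    (μ : Measure (Boundary k)) [IsFiniteMeasure μ]
    (hT : ∀ W : Set (Boundary k), MeasurableSet W → μ (Tmap k ⁻¹' W) = μ W)
    (hcorr : ∀ x y : F k, x ≠ y → η (Cyl2 k x y) = μ (Cyl k (x⁻¹ * y)))
    (C1 C2 : L k → ℝ≥0) (hC1 : ∀ a, 0 < C1 a) (hC2 : ∀ a, 0 < C2 a)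
    (hbound : ∀ a : L k, ∀ E : Set (Boundary k), MeasurableSet E →
      E ⊆ (Cyl k (el k (linv k a)))ᶜ →
      (C1 a : ℝ≥0∞) * μ E ≤ μ (act k (el k a) '' E) ∧
        μ (act k (el k a) '' E) ≤ (C2 a : ℝ≥0∞) * μ E)
    (M : ℝ≥0) (hM1 : ∀ w : F k, 1 / M ≤ Cprod k C1 w⁻¹ / Cprod k C2 w)
    (hM2 : ∀ w : F k, Cprod k C2 w ≤ M) :
    ∃ c : ℝ≥0∞, 0 < c ∧ ∀ f : F k, ∃ b : ℝ≥0∞, 0 < b ∧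
      ∀ E S : Set (Boundary k), MeasurableSet E → MeasurableSet S → Disjoint E S →
        b * μ E ≤ μ (act k f '' E) ∧ c * (μ E * μ S) ≤ η ((E ×ˢ S) ∩ D2 k) :=
  criterion_for_length_compactness_general k η hη μ hcorr C1 C2 hC1 hbound M hM1 hM2

end

end FGC
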